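/- arXiv:2203.16821 — 2 statements merged into one kernel-verified Lean document; each statement's English description precedes it below -/
import Mathlib

section
/- (Main theorem, necessary and sufficient condition.) Let W : ℂ → ℂ be complex differentiable at s₀ = σ₀ + i·t₀ (σ₀, t₀ ∈ ℝ), with W(s₀) ≠ 0. Choose c ∈ {1, i} such that c·W(s₀) lies in the slit plane {z : 0 < Re z ∨ Im z ≠ 0} (such a c always exists since W(s₀) ≠ 0). Then W′(s₀) = 0 if and only if both partial derivatives of the argument function of c·W vanish at (σ₀,t₀), i.e. the derivative of σ ↦ arg(c·W(σ + i·t₀)) at σ₀ is 0 and the derivative of t ↦ arg(c·W(σ₀ + i·t)) at t₀ is 0. -/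
open Complex

/-!
Where `f = c W` avoids the branch cut, `arg ∘ f = Im (log ∘ f)`. Along the horizontal and vertical
lines through `s₀` the derivative of `log ∘ f` is `W'/W` and `I · W'/W`, so the two partials of
the argument are `Im (W'/W)` and `Re (W'/W)`; both vanish iff `W'(s₀) = 0`.
-/

theorem HasDerivAt.arg_comp {f : ℂ → ℂ} {f' : ℂ} {γ : ℝ → ℂ} {v : ℂ} {x : ℝ}
    (hf : HasDerivAt f f' (γ x)) (hγ : HasDerivAt γ v x) (hslit : f (γ x) ∈ slitPlane) :
    HasDerivAt (fun y => arg (f (γ y))) (v * (f' / f (γ x))).im x := by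
  have hlog : HasDerivAt (fun y => Complex.log (f (γ y))) (v * (f' / f (γ x))) x :=
    (hf.clog hslit).scomp x hγ
  simpa only [Function.comp_def, imCLM_apply, log_im] using
    imCLM.hasFDerivAt.comp_hasDerivAt x hlog

theorem hasDerivAt_ofReal_add_const (z : ℂ) (x : ℝ) :
    HasDerivAt (fun y : ℝ => (y : ℂ) + z) 1 x :=
  (hasDerivAt_id (x : ℂ)).comp_ofReal.add_const z

theorem hasDerivAt_const_add_ofReal_mul_I (z : ℂ) (x : ℝ) :
    HasDerivAt (fun y : ℝ => z + y * I) I x := by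
  simpa using ((hasDerivAt_mul_const I).comp_ofReal (z := x)).const_add z

theorem main_theorem_deriv_zero_iff_arg_partials_zero_general (W : ℂ → ℂ) (σ₀ t₀ : ℝ)
    (hW : DifferentiableAt ℂ W (σ₀ + t₀ * I))
    (c : ℂ)
    (hslit : c * W (σ₀ + t₀ * I) ∈ Complex.slitPlane) :
    deriv W (σ₀ + t₀ * I) = 0 ↔
    (deriv (fun σ : ℝ => Complex.arg (c * W (σ + t₀ * I))) σ₀ = 0 ∧
     deriv (fun t : ℝ => Complex.arg (c * W (σ₀ + t * I))) t₀ = 0) := by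
  set s₀ : ℂ := σ₀ + t₀ * I
  have hcW : HasDerivAt (fun s => c * W s) (c * deriv W s₀) s₀ := hW.hasDerivAt.const_mul c
  obtain ⟨hc, hW₀⟩ := mul_ne_zero_iff.mp (slitPlane_ne_zero hslit)
  have hlogDeriv : c * deriv W s₀ / (c * W s₀) = deriv W s₀ / W s₀ := mul_div_mul_left _ _ hc
  have hσ := hcW.arg_comp (γ := fun σ : ℝ => σ + t₀ * I)
    (hasDerivAt_ofReal_add_const _ σ₀) hslit
  have ht := hcW.arg_comp (γ := fun t : ℝ => σ₀ + t * I)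
    (hasDerivAt_const_add_ofReal_mul_I _ t₀) hslit
  rw [hσ.deriv, ht.deriv, hlogDeriv, one_mul, I_mul_im, and_comm]
  exact (div_eq_zero_iff.trans (or_iff_left hW₀)).symm.trans Complex.ext_iff

theorem main_theorem_deriv_zero_iff_arg_partials_zero (W : ℂ → ℂ) (σ₀ t₀ : ℝ)
    (hW : DifferentiableAt ℂ W (σ₀ + t₀ * I))
    (hne : W (σ₀ + t₀ * I) ≠ 0)
    (c : ℂ) (hc : c ∈ ({1, I} : Set ℂ))
    (hslit : c * W (σ₀ + t₀ * I) ∈ Complex.slitPlane) :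
    deriv W (σ₀ + t₀ * I) = 0 ↔
    (deriv (fun σ : ℝ => Complex.arg (c * W (σ + t₀ * I))) σ₀ = 0 ∧
     deriv (fun t : ℝ => Complex.arg (c * W (σ₀ + t * I))) t₀ = 0) :=
  main_theorem_deriv_zero_iff_arg_partials_zero_general W σ₀ t₀ hW c hslit
end

section
/- Let s ∈ ℂ with Im s ≠ 0 (so s is not on the real axis). Then s is not a zero of the derivative of the Gamma function: deriv Γ(s) ≠ 0, where Γ is the complex Gamma function. -/
/-!
Off the real axis `Γ` has no zeros, so `Γ' = ψ Γ` vanishes exactly where the digamma function `ψ`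
does. For `re z > -1/2` the Weierstrass product gives
`log (z Γ(z)) = -γ z + ∑ₖ (z / (k + 1) - log (1 + z / (k + 1)))`, which differentiates termwise to
`ψ(z) = -γ - 1/z + ∑ₖ (1 / (k + 1) - 1 / (z + k + 1))`. Since `im (-1/w)` has the sign of `im w`,
every non-constant term has imaginary part of the sign of `im z`, so `im z * im ψ(z) > 0`. The
functional equation `ψ(z + 1) = ψ(z) + 1/z` carries this to the whole plane off the real axis.
-/

open Filter Topology

open scoped Nat

namespace Complex

noncomputable def weierstrassLogTerm (k : ℕ) (z : ℂ) : ℂ :=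
  z / (k + 1) - log (1 + z / (k + 1))

variable {z : ℂ}

lemma one_add_div_natCast_add_one_mem_slitPlane (hz : -1 < z.re) (k : ℕ) :
    1 + z / (k + 1) ∈ slitPlane := by
  refine mem_slitPlane_iff.mpr (Or.inl ?_)
  have hre := div_natCast_re z (k + 1)
  push_cast at hre
  rw [add_re, one_re, hre, ← sub_neg_eq_add, sub_pos, neg_lt, lt_div_iff₀ (by positivity)]
  linarith

lemma hasDerivAt_weierstrassLogTerm {k : ℕ} (hz : 1 + z / (k + 1) ∈ slitPlane) :
    HasDerivAt (weierstrassLogTerm k) (((k : ℂ) + 1)⁻¹ - (z + (k + 1))⁻¹) z := by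
  have hk : (k + 1 : ℂ) ≠ 0 := Nat.cast_add_one_ne_zero k
  have hlin : HasDerivAt (fun w : ℂ => 1 + w / (k + 1)) (k + 1)⁻¹ z := by
    simpa [div_eq_mul_inv] using ((hasDerivAt_id z).div_const (k + 1 : ℂ)).const_add 1
  refine (((hasDerivAt_id' z).div_const (k + 1 : ℂ)).sub
    ((hasDerivAt_log hz).comp z hlin)).congr_deriv ?_
  have hzk : z + (k + 1) ≠ 0 := by
    have := slitPlane_ne_zero hz
    rw [one_add_div hk, add_comm] at this
    exact (div_ne_zero_iff.mp this).1
  rw [one_add_div hk, add_comm ((k : ℂ) + 1) z, inv_div]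
  field_simp

lemma norm_inv_sub_inv_add_le (hz : -1 / 2 < z.re) (k : ℕ) :
    ‖((k : ℂ) + 1)⁻¹ - (z + (k + 1))⁻¹‖ ≤ 2 * ‖z‖ / ((k : ℝ) + 1) ^ 2 := by
  have hk : (0 : ℝ) < k + 1 := by positivity
  have hre : ((k : ℝ) + 1) / 2 ≤ ‖z + (k + 1)‖ := by
    refine le_trans ?_ (re_le_norm _)
    simp only [add_re, natCast_re, one_re]
    linarith
  have hzk : z + (k + 1) ≠ 0 := norm_pos_iff.mp (by linarith)
  have hnk : ‖((k : ℂ) + 1)‖ = k + 1 := by exact_mod_cast norm_natCast (k + 1)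
  rw [inv_sub_inv (Nat.cast_add_one_ne_zero k) hzk, add_sub_cancel_right, norm_div, norm_mul, hnk]
  calc ‖z‖ / ((k + 1) * ‖z + (k + 1)‖) ≤ ‖z‖ / ((k + 1) * ((k + 1) / 2)) := by gcongr
    _ = 2 * ‖z‖ / ((k : ℝ) + 1) ^ 2 := by field_simp

lemma summable_const_div_natCast_add_one_sq (C : ℝ) :
    Summable fun k : ℕ => C / ((k : ℝ) + 1) ^ 2 := by
  have := (summable_nat_add_iff 1).mpr (Real.summable_one_div_nat_pow.mpr one_lt_two)
  simpa [div_eq_mul_inv] using (this.mul_left C)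

lemma summable_weierstrassLogTerm_and_hasDerivAt_tsum (hz : -1 / 2 < z.re) :
    Summable (weierstrassLogTerm · z) ∧
      HasDerivAt (fun w => ∑' k, weierstrassLogTerm k w)
        (∑' k : ℕ, (((k : ℂ) + 1)⁻¹ - (z + (k + 1))⁻¹)) z := by
  -- `t` is convex, contains `0`, where every term vanishes, and carries a summable uniform bound
  -- on the derivatives of the terms.
  set R := ‖z‖ + 1
  set t := {w : ℂ | -1 / 2 < w.re} ∩ Metric.ball 0 R
  have ht : IsOpen t := (isOpen_lt continuous_const continuous_re).inter Metric.isOpen_ball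
  have ht' : IsPreconnected t :=
    ((convex_halfSpace_re_gt _).inter (convex_ball _ _)).isPreconnected
  have hderiv (k : ℕ) (w : ℂ) (hw : w ∈ t) :
      HasDerivAt (weierstrassLogTerm k) (((k : ℂ) + 1)⁻¹ - (w + (k + 1))⁻¹) w :=
    hasDerivAt_weierstrassLogTerm
      (one_add_div_natCast_add_one_mem_slitPlane (by linarith [hw.1.out]) k)
  have hbound (k : ℕ) (w : ℂ) (hw : w ∈ t) :
      ‖((k : ℂ) + 1)⁻¹ - (w + (k + 1))⁻¹‖ ≤ 2 * R / ((k : ℝ) + 1) ^ 2 := by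
    refine (norm_inv_sub_inv_add_le hw.1 k).trans ?_
    gcongr
    simpa using (Metric.mem_ball.mp hw.2).le
  have h0 : (0 : ℂ) ∈ t := ⟨by norm_num, Metric.mem_ball_self (by positivity)⟩
  have hsum0 : Summable (weierstrassLogTerm · 0) := by simp [weierstrassLogTerm]
  have hzt : z ∈ t := ⟨hz, by simp [R]⟩
  have hu := summable_const_div_natCast_add_one_sq (2 * R)
  exact ⟨summable_of_summable_hasDerivAt_of_isPreconnected hu ht ht' hderiv hbound h0 hsum0 hzt,
    hasDerivAt_tsum_of_isPreconnected hu ht ht' hderiv hbound h0 hsum0 hzt⟩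

lemma exp_sum_weierstrassLogTerm (hz : ∀ k : ℕ, z + (k + 1) ≠ 0) (n : ℕ) :
    exp (∑ k ∈ Finset.range n, weierstrassLogTerm k z)
      = exp (z * harmonic n) * (n ! / ∏ k ∈ Finset.range n, (z + (k + 1))) := by
  have hlog (k : ℕ) : exp (log (1 + z / (k + 1))) = (z + (k + 1)) / (k + 1) := by
    have hk : (k + 1 : ℂ) ≠ 0 := Nat.cast_add_one_ne_zero k
    rw [exp_log (by rw [one_add_div hk, add_comm]; exact div_ne_zero (hz k) hk), one_add_div hk,
      add_comm]
  have hharm : z * harmonic n = ∑ k ∈ Finset.range n, z / (k + 1) := by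
    simp [harmonic, Finset.mul_sum, div_eq_mul_inv]
  have hfact : (n ! : ℂ) = ∏ k ∈ Finset.range n, ((k : ℂ) + 1) := by
    rw [← Finset.prod_range_add_one_eq_factorial]; push_cast; rfl
  simp only [weierstrassLogTerm, Finset.sum_sub_distrib, exp_sub, exp_sum, hlog, hharm,
    Finset.prod_div_distrib, hfact]
  rw [div_div_eq_mul_div, mul_div_assoc]

lemma mul_GammaSeq_mul_exp (hz : ∀ m : ℕ, z ≠ -m) {n : ℕ} (hn : n ≠ 0) :
    z * GammaSeq z n * exp (z * ((harmonic n - Real.log n : ℝ) : ℂ))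
      = exp (∑ k ∈ Finset.range n, weierstrassLogTerm k z) := by
  have hz0 : z ≠ 0 := by simpa using hz 0
  have hzk (k : ℕ) : z + (k + 1) ≠ 0 := by
    intro h; exact hz (k + 1) (by push_cast; linear_combination h)
  have hpow : (n : ℂ) ^ z = exp (z * Real.log n) := by
    rw [cpow_def_of_ne_zero (Nat.cast_ne_zero.mpr hn), natCast_log, mul_comm]
  rw [exp_sum_weierstrassLogTerm hzk, GammaSeq, Finset.prod_range_succ', hpow]
  push_cast
  rw [mul_sub, exp_sub, add_zero]
  field_simp

lemma mul_Gamma_mul_exp_eulerMascheroni (hz : ∀ m : ℕ, z ≠ -m)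
    (hS : Summable (weierstrassLogTerm · z)) :
    z * Gamma z * exp (z * Real.eulerMascheroniConstant) = exp (∑' k, weierstrassLogTerm k z) := by
  have hlim : Tendsto (fun n => z * GammaSeq z n * exp (z * ((harmonic n - Real.log n : ℝ) : ℂ)))
      atTop (𝓝 (z * Gamma z * exp (z * Real.eulerMascheroniConstant))) :=
    ((GammaSeq_tendsto_Gamma z).const_mul z).mul <| (continuous_exp.tendsto _).comp <|
      ((continuous_ofReal.tendsto _).comp Real.tendsto_harmonic_sub_log).const_mul z
  refine tendsto_nhds_unique hlim
    (((continuous_exp.tendsto _).comp hS.hasSum.tendsto_sum_nat).congr' ?_)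
  filter_upwards [eventually_ne_atTop 0] with n hn
  exact (mul_GammaSeq_mul_exp hz hn).symm

lemma logDeriv_cexp_comp {f : ℂ → ℂ} {f' : ℂ} (hf : HasDerivAt f f' z) :
    logDeriv (fun w => exp (f w)) z = f' := by
  rw [logDeriv_apply, hf.cexp.deriv, mul_div_cancel_left₀ _ (exp_ne_zero _)]

lemma digamma_eq_tsum (hz : -1 / 2 < z.re) (hz0 : z ≠ 0) :
    digamma z = -Real.eulerMascheroniConstant - z⁻¹
      + ∑' k : ℕ, (((k : ℂ) + 1)⁻¹ - (z + (k + 1))⁻¹) := by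
  have hnat {w : ℂ} (hw : -1 / 2 < w.re) (hw0 : w ≠ 0) (m : ℕ) : w ≠ -m := by
    rcases m with _ | m
    · simpa using hw0
    · rintro rfl; simp at hw; linarith
  have heq : (fun w => w * Gamma w * exp (w * Real.eulerMascheroniConstant))
      =ᶠ[𝓝 z] fun w => exp (∑' k, weierstrassLogTerm k w) := by
    filter_upwards [(isOpen_lt continuous_const continuous_re).mem_nhds hz,
      isOpen_ne.mem_nhds hz0] with w hw hw0
    exact mul_Gamma_mul_exp_eulerMascheroni (hnat hw hw0)
      (summable_weierstrassLogTerm_and_hasDerivAt_tsum hw).1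
  have hΓ := differentiableAt_Gamma z (hnat hz hz0)
  have hΓ0 := Gamma_ne_zero (hnat hz hz0)
  have hexp : HasDerivAt (fun w => w * (Real.eulerMascheroniConstant : ℂ))
      Real.eulerMascheroniConstant z := by simpa using (hasDerivAt_id z).mul_const _
  have := (logDeriv_congr_nhds heq).eq_of_nhds
  rw [logDeriv_cexp_comp (summable_weierstrassLogTerm_and_hasDerivAt_tsum hz).2,
    logDeriv_mul (f := fun w => w * Gamma w) (g := fun w => exp (w * Real.eulerMascheroniConstant))
      z (mul_ne_zero hz0 hΓ0) (exp_ne_zero _) (differentiableAt_fun_id.mul hΓ)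
      hexp.cexp.differentiableAt,
    logDeriv_mul (f := fun w => w) z hz0 hΓ0 differentiableAt_fun_id hΓ,
    logDeriv_cexp_comp hexp, logDeriv_apply (fun w => w), deriv_id'', one_div] at this
  rw [digamma_def, ← this]
  ring

lemma ne_neg_natCast_of_im_ne_zero (hz : z.im ≠ 0) (m : ℕ) : z ≠ -m := by
  rintro rfl
  simp at hz

lemma im_mul_neg_im_inv_pos (hz : z.im ≠ 0) : 0 < z.im * -(z⁻¹).im := by
  rw [inv_im, neg_div, neg_neg, mul_div_assoc']
  exact div_pos (mul_self_pos.mpr hz) (normSq_pos.mpr fun h => hz (by simp [h]))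

lemma im_mul_im_digamma_pos_of_re_gt (hz : -1 / 2 < z.re) (him : z.im ≠ 0) :
    0 < z.im * (digamma z).im := by
  have hsum : Summable fun k : ℕ => ((k : ℂ) + 1)⁻¹ - (z + (k + 1))⁻¹ :=
    .of_norm_bounded (summable_const_div_natCast_add_one_sq _) (norm_inv_sub_inv_add_le hz)
  have hterm (k : ℕ) : 0 ≤ z.im * (((k : ℂ) + 1)⁻¹ - (z + (k + 1))⁻¹).im := by
    have hk : ((k : ℂ) + 1)⁻¹.im = 0 := by rw [inv_im]; simp
    have hw : (z + (k + 1)).im = z.im := by simp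
    rw [sub_im, hk, zero_sub, ← hw]
    exact (im_mul_neg_im_inv_pos (by rwa [hw])).le
  rw [digamma_eq_tsum hz (fun h => him (by simp [h])), add_im, sub_im, neg_im, ofReal_im,
    neg_zero, zero_sub, im_tsum hsum, mul_add, ← tsum_mul_left]
  have htail : 0 ≤ ∑' k : ℕ, z.im * (((k : ℂ) + 1)⁻¹ - (z + (k + 1))⁻¹).im :=
    tsum_nonneg hterm
  linarith [im_mul_neg_im_inv_pos him]

lemma im_mul_im_digamma_pos_of_add_one (him : z.im ≠ 0)
    (h : 0 < z.im * (digamma (z + 1)).im) : 0 < z.im * (digamma z).im := by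
  rw [digamma_apply_add_one z (ne_neg_natCast_of_im_ne_zero him), add_im, mul_add] at h
  linarith [im_mul_neg_im_inv_pos him]

lemma im_mul_im_digamma_pos (him : z.im ≠ 0) : 0 < z.im * (digamma z).im := by
  obtain ⟨n, hn⟩ := exists_nat_gt (-z.re)
  induction n generalizing z with
  | zero => exact im_mul_im_digamma_pos_of_re_gt (by push_cast at hn; linarith) him
  | succ n ih =>
    push_cast at hn
    have h := ih (z := z + 1) (by simpa) (by rw [add_re, one_re]; linarith)
    rw [add_im, one_im, add_zero] at h
    exact im_mul_im_digamma_pos_of_add_one him h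

end Complex

theorem deriv_Gamma_ne_zero_of_im_ne_zero (s : ℂ) (hs : s.im ≠ 0) :
    deriv Complex.Gamma s ≠ 0 := by
  have hΓ := Complex.Gamma_ne_zero (Complex.ne_neg_natCast_of_im_ne_zero hs)
  have hψ : Complex.digamma s ≠ 0 := fun h =>
    (Complex.im_mul_im_digamma_pos hs).ne' (by simp [h])
  have hderiv : deriv Complex.Gamma s = Complex.digamma s * Complex.Gamma s := by
    rw [Complex.digamma_def, logDeriv_apply, div_mul_cancel₀ _ hΓ]
  rw [hderiv]
  exact mul_ne_zero hψ hΓ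
end
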